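/- There exists a continuous real-valued function on ℝ that is nowhere differentiable. -/

import Mathlib

/-!
The Takagi function `takagi x = ∑ 2⁻ⁿ d(2ⁿ x, ℤ)`. At the endpoints of a dyadic interval
`[k / 2ⁿ, (k + 1) / 2ⁿ]` only the first `n` terms survive, and on that interval each of them is
affine with slope `±1`. So the difference quotient of `takagi` over the interval is a sum of `n`
signs: an integer with the parity of `n`. If `takagi` were differentiable at `x`, the difference
quotients over the dyadic intervals straddling `x` would converge to its derivative, which a
sequence of integers of alternating parity cannot do.
-/

open Filter Topology Asymptotics Finset

theorem HasDerivAt.tendsto_slope_of_le_of_le {E : Type*} [NormedAddCommGroup E] [NormedSpace ℝ E]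
    {f : ℝ → E} {f' : E} {x : ℝ} (hf : HasDerivAt f f' x) {ι : Type*} {l : Filter ι}
    {u v : ι → ℝ} (hu : Tendsto u l (𝓝 x)) (hv : Tendsto v l (𝓝 x))
    (hux : ∀ i, u i ≤ x) (hxv : ∀ i, x ≤ v i) (huv : ∀ i, u i ≠ v i) :
    Tendsto (fun i => slope f (u i) (v i)) l (𝓝 f') := by
  have hremainder : ∀ w : ι → ℝ, Tendsto w l (𝓝 x) → (∀ i, |w i - x| ≤ |v i - u i|) →
      (fun i => f (w i) - f x - (w i - x) • f') =o[l] fun i => v i - u i := fun w hw hwuv =>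
    ((hasDerivAt_iff_isLittleO.1 hf).comp_tendsto hw).trans_isBigO
      (IsBigO.of_bound 1 (Eventually.of_forall fun i => by simpa using hwuv i))
  have hv' := hremainder v hv fun i => by
    rw [abs_of_nonneg (sub_nonneg.2 (hxv i)), abs_of_nonneg (by linarith [hux i, hxv i])]
    linarith [hux i]
  have hu' := hremainder u hu fun i => by
    rw [abs_of_nonpos (sub_nonpos.2 (hux i)), abs_of_nonneg (by linarith [hux i, hxv i])]
    linarith [hxv i]
  rw [← tendsto_sub_nhds_zero_iff]
  refine (hv'.sub hu').tendsto_inv_smul_nhds_zero.congr fun i => ?_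
  have hcancel : f (v i) - f x - (v i - x) • f' - (f (u i) - f x - (u i - x) • f') =
      f (v i) - f (u i) - (v i - u i) • f' := by
    rw [sub_smul, sub_smul, sub_smul]; abel
  rw [hcancel, smul_sub, smul_smul, inv_mul_cancel₀ (sub_ne_zero.2 (huv i).symm), one_smul,
    slope_def_module]

lemma exists_int_sum_eq_of_abs_eq_one {ε : ℕ → ℝ} {n : ℕ} (h : ∀ m < n, |ε m| = 1) :
    ∃ q : ℤ, ∑ m ∈ range n, ε m = q ∧ Even (q + n) := by
  induction n with
  | zero => exact ⟨0, by simp⟩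
  | succ n ih =>
    obtain ⟨q, hq, heven⟩ := ih fun m hm => h m (by omega)
    rw [sum_range_succ, hq]
    rcases (abs_eq zero_le_one).1 (h n n.lt_succ_self) with hε | hε
    · refine ⟨q + 1, by rw [hε]; push_cast; ring, ?_⟩
      rw [show q + 1 + ((n + 1 : ℕ) : ℤ) = q + n + 2 by push_cast; ring]
      exact heven.add even_two
    · refine ⟨q - 1, by rw [hε]; push_cast; ring, ?_⟩
      rwa [show q - 1 + ((n + 1 : ℕ) : ℤ) = q + n by push_cast; ring]

lemma not_tendsto_intCast_of_even_add (q : ℕ → ℤ) (hq : ∀ n, Even (q n + n)) (L : ℝ) :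
    ¬ Tendsto (fun n => (q n : ℝ)) atTop (𝓝 L) := by
  intro hL
  have hdiff : Tendsto (fun n => (q (n + 1) : ℝ) - q n) atTop (𝓝 0) := by
    simpa using (hL.comp (tendsto_add_atTop_nat 1)).sub hL
  obtain ⟨n, hn⟩ := (hdiff.eventually (Metric.ball_mem_nhds 0 one_pos)).exists
  have hsucc : q (n + 1) = q n := by
    rw [Real.dist_eq, sub_zero] at hn
    have : |q (n + 1) - q n| < 1 := by exact_mod_cast hn
    linarith [Int.abs_lt_one_iff.1 this]
  have := hq (n + 1)
  rw [hsucc, Nat.cast_succ, ← add_assoc, Int.even_add_one] at this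
  exact this (hq n)

/-- The norm on `UnitAddCircle` is the distance to the nearest integer. -/
noncomputable def distToInt (x : ℝ) : ℝ := ‖(x : UnitAddCircle)‖

@[fun_prop]
lemma continuous_distToInt : Continuous distToInt :=
  continuous_norm.comp (AddCircle.continuous_mk' 1)

lemma distToInt_nonneg (x : ℝ) : 0 ≤ distToInt x := norm_nonneg _

lemma distToInt_le_half (x : ℝ) : distToInt x ≤ 1 / 2 := by
  simpa [distToInt] using
    AddCircle.norm_le_half_period (p := (1 : ℝ)) (x := (x : UnitAddCircle)) one_ne_zero

lemma distToInt_intCast (m : ℤ) : distToInt m = 0 := by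
  simp [distToInt, UnitAddCircle.norm_eq]

lemma distToInt_eq_abs_sub {y : ℝ} {m : ℤ} (h : |y - m| ≤ 1 / 2) : distToInt y = |y - m| := by
  have hm : ((m : ℝ) : UnitAddCircle) = 0 := (AddCircle.coe_eq_zero_iff 1).2 ⟨m, by simp⟩
  rw [distToInt, ← sub_zero (y : UnitAddCircle), ← hm, ← AddCircle.coe_sub,
    AddCircle.norm_coe_eq_abs_iff (p := 1) one_ne_zero]
  simpa using h

lemma distToInt_eq_sub_of_mem_Icc {y : ℝ} {m : ℤ} (hy : y ∈ Set.Icc (m : ℝ) (m + 1 / 2)) :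
    distToInt y = y - m := by
  rw [distToInt_eq_abs_sub (m := m) (abs_le.2 ⟨by linarith [hy.1], by linarith [hy.2]⟩),
    abs_of_nonneg (by linarith [hy.1])]

lemma distToInt_eq_sub_of_mem_Icc' {y : ℝ} {m : ℤ} (hy : y ∈ Set.Icc ((m : ℝ) - 1 / 2) m) :
    distToInt y = m - y := by
  rw [distToInt_eq_abs_sub (m := m) (abs_le.2 ⟨by linarith [hy.1], by linarith [hy.2]⟩),
    abs_of_nonpos (by linarith [hy.2]), neg_sub]

lemma abs_distToInt_sub {j : ℤ} {a b : ℝ} (ha : a ∈ Set.Icc ((j : ℝ) / 2) ((j + 1) / 2))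
    (hb : b ∈ Set.Icc ((j : ℝ) / 2) ((j + 1) / 2)) :
    |distToInt b - distToInt a| = |b - a| := by
  obtain ⟨i, rfl | rfl⟩ := Int.even_or_odd' j
  · have hI : Set.Icc (((2 * i : ℤ) : ℝ) / 2) ((((2 * i : ℤ) : ℝ) + 1) / 2) =
        Set.Icc (i : ℝ) (i + 1 / 2) := by
      push_cast; ring_nf
    rw [hI] at ha hb
    rw [distToInt_eq_sub_of_mem_Icc ha, distToInt_eq_sub_of_mem_Icc hb, sub_sub_sub_cancel_right]
  · have hI : Set.Icc (((2 * i + 1 : ℤ) : ℝ) / 2) ((((2 * i + 1 : ℤ) : ℝ) + 1) / 2) =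
        Set.Icc (((i + 1 : ℤ) : ℝ) - 1 / 2) ((i + 1 : ℤ) : ℝ) := by
      push_cast; ring_nf
    rw [hI] at ha hb
    rw [distToInt_eq_sub_of_mem_Icc' ha, distToInt_eq_sub_of_mem_Icc' hb, sub_sub_sub_cancel_left,
      abs_sub_comm]

lemma exists_dyadic_subset_Icc_half (k : ℤ) {m n : ℕ} (hmn : m < n) :
    ∃ j : ℤ, (j : ℝ) / 2 ≤ 2 ^ m * (k / 2 ^ n) ∧
      2 ^ m * (((k : ℝ) + 1) / 2 ^ n) ≤ ((j : ℝ) + 1) / 2 := by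
  obtain ⟨d, rfl⟩ := Nat.exists_eq_add_of_lt hmn
  have hd : (0 : ℤ) < 2 ^ d := by positivity
  have hlo : ((k / 2 ^ d : ℤ) : ℝ) * 2 ^ d ≤ k := by exact_mod_cast Int.ediv_mul_le k hd.ne'
  have hhi : (k : ℝ) + 1 ≤ ((k / 2 ^ d : ℤ) + 1) * 2 ^ d := by
    exact_mod_cast Int.lt_ediv_add_one_mul_self k hd
  have hscale : ∀ t : ℝ, 2 ^ m * (t / 2 ^ (m + d + 1)) = t / 2 ^ d / 2 := fun t => by
    rw [pow_add, pow_add]; field_simp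
  refine ⟨k / 2 ^ d, ?_, ?_⟩ <;> rw [hscale] <;> gcongr
  · rwa [le_div_iff₀ (by positivity)]
  · rwa [div_le_iff₀ (by positivity)]

noncomputable def takagi (x : ℝ) : ℝ := ∑' n : ℕ, (2 : ℝ)⁻¹ ^ n * distToInt (2 ^ n * x)

lemma continuous_takagi : Continuous takagi := by
  refine continuous_tsum (fun n => by fun_prop)
    (summable_geometric_of_lt_one (r := (2 : ℝ)⁻¹) (by norm_num) (by norm_num)) fun n x => ?_
  rw [norm_mul, norm_pow, norm_inv, Real.norm_two, Real.norm_of_nonneg (distToInt_nonneg _)]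
  exact mul_le_of_le_one_right (by positivity) (by linarith [distToInt_le_half (2 ^ n * x)])

lemma takagi_dyadic (p : ℤ) (n : ℕ) :
    takagi (p / 2 ^ n) = ∑ m ∈ range n, (2 : ℝ)⁻¹ ^ m * distToInt (2 ^ m * (p / 2 ^ n)) := by
  refine tsum_eq_sum fun m hm => ?_
  obtain ⟨d, rfl⟩ := Nat.exists_eq_add_of_le (not_lt.1 (by simpa using hm))
  have : (2 : ℝ) ^ (n + d) * (p / 2 ^ n) = ((p * 2 ^ d : ℤ) : ℝ) := by
    push_cast; rw [pow_add]; field_simp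
  rw [this, distToInt_intCast, mul_zero]

lemma exists_takagi_dyadic_increment (k : ℤ) (n : ℕ) :
    ∃ q : ℤ, 2 ^ n * (takagi ((k + 1) / 2 ^ n) - takagi (k / 2 ^ n)) = q ∧ Even (q + n) := by
  have hk : takagi ((k + 1) / 2 ^ n) =
      ∑ m ∈ range n, (2 : ℝ)⁻¹ ^ m * distToInt (2 ^ m * ((k + 1) / 2 ^ n)) := by
    exact_mod_cast takagi_dyadic (k + 1) n
  rw [hk, takagi_dyadic, ← sum_sub_distrib, mul_sum]
  refine exists_int_sum_eq_of_abs_eq_one fun m hm => ?_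
  obtain ⟨j, hj₁, hj₂⟩ := exists_dyadic_subset_Icc_half k hm
  have hle : (2 : ℝ) ^ m * (k / 2 ^ n) ≤ 2 ^ m * ((k + 1) / 2 ^ n) := by gcongr; linarith
  have hslope := abs_distToInt_sub (j := j) ⟨hj₁, hle.trans hj₂⟩ ⟨hj₁.trans hle, hj₂⟩
  have hwidth : (2 : ℝ) ^ m * ((k + 1) / 2 ^ n) - 2 ^ m * (k / 2 ^ n) = 2 ^ m / 2 ^ n := by ring
  rw [← mul_sub, abs_mul, abs_mul, hslope, hwidth, abs_of_pos (by positivity),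
    abs_of_pos (by positivity), abs_of_pos (by positivity), inv_pow]
  field_simp

lemma floor_two_pow_mul_div_le_and_lt (x : ℝ) (n : ℕ) :
    ⌊2 ^ n * x⌋ / 2 ^ n ≤ x ∧ x < (⌊2 ^ n * x⌋ + 1) / 2 ^ n := by
  have h₀ : (0 : ℝ) < 2 ^ n := by positivity
  rw [div_le_iff₀ h₀, lt_div_iff₀ h₀, mul_comm x]
  exact ⟨Int.floor_le _, Int.lt_floor_add_one _⟩

lemma tendsto_floor_two_pow_mul_add_div (x c : ℝ) :
    Tendsto (fun n : ℕ => (⌊2 ^ n * x⌋ + c) / 2 ^ n) atTop (𝓝 x) := by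
  have hinv : Tendsto (fun n : ℕ => ((2 : ℝ) ^ n)⁻¹) atTop (𝓝 0) :=
    tendsto_inv_atTop_zero.comp (tendsto_pow_atTop_atTop_of_one_lt one_lt_two)
  have hfloor : Tendsto (fun n : ℕ => ⌊2 ^ n * x⌋ / (2 : ℝ) ^ n) atTop (𝓝 x) := by
    refine tendsto_of_tendsto_of_tendsto_of_le_of_le (by simpa using tendsto_const_nhds.sub hinv)
      tendsto_const_nhds (fun n => ?_) fun n => (floor_two_pow_mul_div_le_and_lt x n).1
    have := (floor_two_pow_mul_div_le_and_lt x n).2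
    rw [add_div, one_div] at this
    linarith
  have hlim := hfloor.add (hinv.const_mul c)
  rw [mul_zero, add_zero] at hlim
  exact hlim.congr fun n => by ring

/-- There exists a continuous nowhere-differentiable function on ℝ. -/
theorem stmt10 : ∃ f : ℝ → ℝ, Continuous f ∧ ∀ x : ℝ, ¬ DifferentiableAt ℝ f x := by
  refine ⟨takagi, continuous_takagi, fun x hx => ?_⟩
  choose q hq hparity using fun n : ℕ => exists_takagi_dyadic_increment ⌊2 ^ n * x⌋ n
  refine not_tendsto_intCast_of_even_add q hparity (deriv takagi x) ?_
  have hmem := floor_two_pow_mul_div_le_and_lt x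
  have hslope := hx.hasDerivAt.tendsto_slope_of_le_of_le
    (by simpa using tendsto_floor_two_pow_mul_add_div x 0) (tendsto_floor_two_pow_mul_add_div x 1)
    (fun n => (hmem n).1) (fun n => (hmem n).2.le) fun n => ((hmem n).1.trans_lt (hmem n).2).ne
  refine hslope.congr fun n => ?_
  rw [slope_def_field, ← hq]
  field_simp
  ring
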